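/- For every 2-generic real X, the Turing jump X′ of X is not truth-table reducible to X ⊕ 0′ (the join of X with the halting problem). -/

import Mathlib

/-- `A` is truth-table reducible to `B`: there is a computable bound `f` and a total
computable evaluator `g` such that `A n` is determined by `B ↾ f n` via `g`. -/
def TTReducible (A B : ℕ → Bool) : Prop :=
  ∃ f : ℕ → ℕ, Computable f ∧ ∃ g : ℕ → List Bool → Bool, Computable₂ g ∧
    ∀ n, A n = g n ((List.range (f n)).map B)

/-- Truth-table equivalence. -/
def TTEquiv (A B : ℕ → Bool) : Prop := TTReducible A B ∧ TTReducible B A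

/-- The effective join `A ⊕ B`. -/
def ttJoin (A B : ℕ → Bool) : ℕ → Bool :=
  fun n => if n % 2 = 0 then A (n / 2) else B (n / 2)

/-- Codes for oracle (relative) partial recursive functions. -/
inductive OCode : Type
  | zero | succ | left | right | oracle
  | pair : OCode → OCode → OCode
  | comp : OCode → OCode → OCode
  | prec : OCode → OCode → OCode
  | rfind' : OCode → OCode

/-- Evaluation of an oracle code relative to an oracle `O : ℕ → Bool`. -/
def OCode.eval (O : ℕ → Bool) : OCode → ℕ →. ℕ
  | .zero => pure 0
  | .succ => fun n => Part.some (n + 1)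
  | .left => fun n : ℕ => Part.some n.unpair.1
  | .right => fun n : ℕ => Part.some n.unpair.2
  | .oracle => fun n => Part.some (cond (O n) 1 0)
  | .pair cf cg => fun n => Nat.pair <$> OCode.eval O cf n <*> OCode.eval O cg n
  | .comp cf cg => fun n => OCode.eval O cg n >>= OCode.eval O cf
  | .prec cf cg =>
    Nat.unpaired fun a n =>
      n.rec (OCode.eval O cf a) fun y IH => do
        let i ← IH
        OCode.eval O cg (Nat.pair a (Nat.pair y i))
  | .rfind' cf =>
    Nat.unpaired fun a m =>
      (Nat.rfind fun n => (fun m => m = 0) <$> OCode.eval O cf (Nat.pair a (n + m))).map (· + m)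

/-- A standard enumeration of the oracle codes. -/
def OCode.ofNat : ℕ → OCode
  | 0 => .zero
  | 1 => .succ
  | 2 => .left
  | 3 => .right
  | 4 => .oracle
  | n + 5 =>
    let m := n.div2.div2
    have hm : m < n + 5 := by
      simp only [m, Nat.div2_val]
      exact lt_of_le_of_lt (le_trans (Nat.div_le_self _ _) (Nat.div_le_self _ _))
        (by omega)
    have _m1 : m.unpair.1 < n + 5 := lt_of_le_of_lt m.unpair_left_le hm
    have _m2 : m.unpair.2 < n + 5 := lt_of_le_of_lt m.unpair_right_le hm
    match n.bodd, n.div2.bodd with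
    | false, false => .pair (OCode.ofNat m.unpair.1) (OCode.ofNat m.unpair.2)
    | false, true  => .comp (OCode.ofNat m.unpair.1) (OCode.ofNat m.unpair.2)
    | true , false => .prec (OCode.ofNat m.unpair.1) (OCode.ofNat m.unpair.2)
    | true , true  => .rfind' (OCode.ofNat m)
decreasing_by all_goals (simp only [m] at *; omega)

open Classical in
/-- The Turing jump `X′` of a real `X` : the halting problem relative to `X`. -/
noncomputable def ttJump (X : ℕ → Bool) : ℕ → Bool :=
  fun e => if ((OCode.ofNat e).eval X e).Dom then true else false

/-- The `n`-th iterated jump. -/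
noncomputable def ttJumpIter : ℕ → (ℕ → Bool) → (ℕ → Bool)
  | 0, X => X
  | n + 1, X => ttJump (ttJumpIter n X)

/-- The initial segment `X ↾ l` of a real, as a finite binary string. -/
def strPrefix (X : ℕ → Bool) (l : ℕ) : List Bool := (List.range l).map X

/-- `S` is a `Σ₂` set of strings. -/
def IsSigma2 (S : Set (List Bool)) : Prop :=
  ∃ R : List Bool → ℕ → ℕ → Bool,
    Computable (fun p : List Bool × ℕ × ℕ => R p.1 p.2.1 p.2.2) ∧
    ∀ σ, σ ∈ S ↔ ∃ a, ∀ b, R σ a b = true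

/-- `X` is 2-generic: for every `Σ₂` set `S` of strings, either some initial segment of `X`
is in `S`, or past some initial segment no extension is in `S`. -/
def TwoGeneric (X : ℕ → Bool) : Prop :=
  ∀ S : Set (List Bool), IsSigma2 S →
    (∃ l, strPrefix X l ∈ S) ∨ (∃ l, ∀ τ : List Bool, strPrefix X l <+: τ → τ ∉ S)

/-!
Suppose `X′ = Φ(X ⊕ ∅′)` by a truth-table reduction with use bound `f`. Uniformly in `k` there is
an index `N k` of the oracle machine that halts iff its oracle has a `1` at position `f (N k) + k`,
so `X′(N k) = X(f (N k) + k)`: a bit of `X` that `Φ` does not read when it computes `X′(N k)`.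
The strings `σ` for which `Φ`, applied to `σ ⊕ ∅′`, mispredicts the bit `σ(f (N k) + k)` for some
`k` form a `Σ₂` set, because `∅′ ↾ m` is `Δ₂` uniformly in `m`. Every string has an extension in
this set (take `k` so large that the bit lies beyond the string, and set it against the
prediction), but no initial segment of `X` is in it; so `X` is not 2-generic.
-/

open Nat.Partrec (Code)
open Filter

local notation "∅′" => ttJump fun _ => false

namespace OCode

def index : OCode → ℕ
  | zero => 0
  | succ => 1
  | left => 2
  | right => 3
  | oracle => 4
  | pair a b => 4 * Nat.pair a.index b.index + 5
  | prec a b => 4 * Nat.pair a.index b.index + 6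
  | comp a b => 4 * Nat.pair a.index b.index + 7
  | rfind' a => 4 * a.index + 8

theorem ofNat_four_mul_add_five (M : ℕ) :
    ofNat (4 * M + 5) = pair (ofNat M.unpair.1) (ofNat M.unpair.2) := by
  have h₁ : (4 * M).bodd = false := by simp [Nat.bodd_mul]
  have h₂ : (4 * M).div2 = 2 * M := by rw [Nat.div2_val]; omega
  have h₃ : (2 * M).bodd = false := by simp [Nat.bodd_mul]
  have h₄ : (2 * M).div2 = M := by rw [Nat.div2_val]; omega
  rw [ofNat]
  simp only [h₁, h₂, h₃, h₄]

theorem ofNat_four_mul_add_six (M : ℕ) :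
    ofNat (4 * M + 6) = prec (ofNat M.unpair.1) (ofNat M.unpair.2) := by
  have h₁ : (4 * M + 1).bodd = true := by simp [Nat.bodd_mul]
  have h₂ : (4 * M + 1).div2 = 2 * M := by rw [Nat.div2_val]; omega
  have h₃ : (2 * M).bodd = false := by simp [Nat.bodd_mul]
  have h₄ : (2 * M).div2 = M := by rw [Nat.div2_val]; omega
  rw [ofNat]
  simp only [h₁, h₂, h₃, h₄]

theorem ofNat_four_mul_add_seven (M : ℕ) :
    ofNat (4 * M + 7) = comp (ofNat M.unpair.1) (ofNat M.unpair.2) := by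
  have h₁ : (4 * M + 2).bodd = false := by simp [Nat.bodd_mul]
  have h₂ : (4 * M + 2).div2 = 2 * M + 1 := by rw [Nat.div2_val]; omega
  have h₃ : (2 * M + 1).bodd = true := by simp [Nat.bodd_mul]
  have h₄ : (2 * M + 1).div2 = M := by rw [Nat.div2_val]; omega
  rw [ofNat]
  simp only [h₁, h₂, h₃, h₄]

theorem ofNat_four_mul_add_eight (M : ℕ) :
    ofNat (4 * M + 8) = rfind' (ofNat M) := by
  have h₁ : (4 * M + 3).bodd = true := by simp [Nat.bodd_mul]
  have h₂ : (4 * M + 3).div2 = 2 * M + 1 := by rw [Nat.div2_val]; omega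
  have h₃ : (2 * M + 1).bodd = true := by simp [Nat.bodd_mul]
  have h₄ : (2 * M + 1).div2 = M := by rw [Nat.div2_val]; omega
  rw [ofNat]
  simp only [h₁, h₂, h₃, h₄]

theorem ofNat_index (c : OCode) : ofNat c.index = c := by
  induction c with
  | pair a b iha ihb => rw [index, ofNat_four_mul_add_five, Nat.unpair_pair, iha, ihb]
  | prec a b iha ihb => rw [index, ofNat_four_mul_add_six, Nat.unpair_pair, iha, ihb]
  | comp a b iha ihb => rw [index, ofNat_four_mul_add_seven, Nat.unpair_pair, iha, ihb]
  | rfind' a iha => rw [index, ofNat_four_mul_add_eight, iha]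
  | _ => rw [index, ofNat]

def ofCode : Code → OCode
  | .zero => zero
  | .succ => succ
  | .left => left
  | .right => right
  | .pair a b => pair (ofCode a) (ofCode b)
  | .comp a b => comp (ofCode a) (ofCode b)
  | .prec a b => prec (ofCode a) (ofCode b)
  | .rfind' a => rfind' (ofCode a)

theorem eval_ofCode (O : ℕ → Bool) (c : Code) : (ofCode c).eval O = c.eval := by
  induction c with
  | zero => rfl
  | pair a b iha ihb => simp only [ofCode, eval, Code.eval, iha, ihb]; rfl
  | comp a b iha ihb => simp only [ofCode, eval, Code.eval, iha, ihb]; rfl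
  | prec a b iha ihb => simp only [ofCode, eval, Code.eval, iha, ihb]; rfl
  | rfind' a iha => simp only [ofCode, eval, Code.eval, iha]; rfl
  | _ => funext n; simp [ofCode, eval, Code.eval]

def toCode : OCode → Code
  | zero | oracle => .zero
  | succ => .succ
  | left => .left
  | right => .right
  | pair a b => .pair a.toCode b.toCode
  | comp a b => .comp a.toCode b.toCode
  | prec a b => .prec a.toCode b.toCode
  | rfind' a => .rfind' a.toCode

theorem eval_toCode (c : OCode) : c.toCode.eval = c.eval fun _ => false := by
  induction c with
  | zero => rfl
  | pair a b iha ihb => simp only [toCode, eval, Code.eval, iha, ihb]; rfl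
  | comp a b iha ihb => simp only [toCode, eval, Code.eval, iha, ihb]; rfl
  | prec a b iha ihb => simp only [toCode, eval, Code.eval, iha, ihb]; rfl
  | rfind' a iha => simp only [toCode, eval, Code.eval, iha]; rfl
  | oracle => funext n; simp [toCode, eval, Code.eval]; rfl
  | _ => funext n; simp [toCode, eval, Code.eval]

end OCode

theorem getD_map_range {α : Type*} (F : ℕ → α) (d : α) {n i : ℕ} (h : i < n) :
    ((List.range n).map F).getD i d = F i := by
  simp [h]

section

open OCode

def toCodeIndex (n : ℕ) : ℕ := Encodable.encode (ofNat n).toCode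

/-- `toCodeIndex n` from the list of its values below `n`, following the clauses of
`OCode.ofNat` and `Nat.Partrec.Code.encodeCode`. -/
def toCodeIndexStep (l : List ℕ) : ℕ :=
  if l.length < 5 then (if l.length = 4 then 0 else l.length) else
    let r := (l.length - 5) % 4
    let M := (l.length - 5) / 4
    let ab := Nat.pair (l.getD M.unpair.1 0) (l.getD M.unpair.2 0)
    if r = 0 then 2 * (2 * ab) + 4
    else if r = 1 then 2 * (2 * ab) + 5
    else if r = 2 then 2 * (2 * ab + 1) + 4
    else 2 * (2 * l.getD M 0 + 1) + 5

theorem toCodeIndexStep_map_range (n : ℕ) :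
    toCodeIndexStep ((List.range n).map toCodeIndex) = toCodeIndex n := by
  rcases lt_or_ge n 5 with hn | hn
  · interval_cases n <;>
      simp [toCodeIndexStep, toCodeIndex, ofNat, toCode, Code.encodeCode_eq, Code.encodeCode]
  obtain ⟨k, rfl⟩ := Nat.exists_eq_add_of_le' hn
  have hM : k / 4 < k + 5 := by omega
  have hM₁ : (k / 4).unpair.1 < k + 5 := (Nat.unpair_left_le _).trans_lt hM
  have hM₂ : (k / 4).unpair.2 < k + 5 := (Nat.unpair_right_le _).trans_lt hM
  simp only [toCodeIndexStep, List.length_map, List.length_range, Nat.add_sub_cancel,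
    getD_map_range _ _ hM, getD_map_range _ _ hM₁, getD_map_range _ _ hM₂,
    if_neg (by omega : ¬k + 5 < 5)]
  obtain ⟨M, r, hr, rfl⟩ : ∃ M r, r < 4 ∧ k = 4 * M + r := ⟨k / 4, k % 4, by omega, by omega⟩
  rw [show (4 * M + r) / 4 = M by omega, show (4 * M + r) % 4 = r by omega]
  interval_cases r <;>
    simp [toCodeIndex, ofNat_four_mul_add_five, ofNat_four_mul_add_six, ofNat_four_mul_add_seven,
      ofNat_four_mul_add_eight, toCode, Code.encodeCode_eq, Code.encodeCode]

theorem primrec_toCodeIndexStep : Primrec toCodeIndexStep := by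
  have hlen : Primrec fun l : List ℕ => l.length := Primrec.list_length
  have hk : Primrec fun l : List ℕ => l.length - 5 := Primrec.nat_sub.comp hlen (.const 5)
  have hr : Primrec fun l : List ℕ => (l.length - 5) % 4 := Primrec.nat_mod.comp hk (.const 4)
  have hM : Primrec fun l : List ℕ => (l.length - 5) / 4 := Primrec.nat_div.comp hk (.const 4)
  have hget : ∀ {i : List ℕ → ℕ}, Primrec i → Primrec fun l : List ℕ => l.getD (i l) 0 :=
    fun hi => (Primrec.list_getD 0).comp .id hi
  have hab : Primrec fun l : List ℕ => Nat.pair (l.getD ((l.length - 5) / 4).unpair.1 0)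
      (l.getD ((l.length - 5) / 4).unpair.2 0) :=
    Primrec₂.natPair.comp (hget (Primrec.fst.comp (Primrec.unpair.comp hM)))
      (hget (Primrec.snd.comp (Primrec.unpair.comp hM)))
  have hr_eq : ∀ c, PrimrecPred fun l : List ℕ => (l.length - 5) % 4 = c :=
    fun c => Primrec.eq.comp hr (.const c)
  have lin : ∀ {u : List ℕ → ℕ} (a b : ℕ), Primrec u → Primrec fun l => a * u l + b :=
    fun a b hu => Primrec.nat_add.comp (Primrec.nat_mul.comp (.const a) hu) (.const b)
  unfold toCodeIndexStep
  refine .ite (Primrec.nat_lt.comp hlen (.const 5))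
    (.ite (Primrec.eq.comp hlen (.const 4)) (.const 0) hlen) ?_
  refine .ite (hr_eq 0) ?_ (.ite (hr_eq 1) ?_ (.ite (hr_eq 2) ?_ ?_))
  · exact lin 2 4 (lin 2 0 hab)
  · exact lin 2 5 (lin 2 0 hab)
  · exact lin 2 4 (lin 2 1 hab)
  · exact lin 2 5 (lin 2 1 (hget hM))

theorem primrec_toCodeIndex : Primrec toCodeIndex :=
  (Primrec.nat_strong_rec (fun (_ : Unit) n => toCodeIndex n)
      (Primrec.option_some.comp (primrec_toCodeIndexStep.comp Primrec.snd)).to₂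
      fun _ n => by simp [toCodeIndexStep_map_range]).comp (.const ()) .id

theorem primrec_toCode_ofNat : Primrec fun n => (ofNat n).toCode :=
  ((Primrec.ofNat Code).comp primrec_toCodeIndex).of_eq fun _ => Denumerable.ofNat_encode _

def haltApprox (s j : ℕ) : Bool := (Code.evaln s (ofNat j).toCode j).isSome

theorem primrec₂_haltApprox : Primrec₂ haltApprox :=
  Primrec.option_isSome.comp (Code.primrec_evaln.comp
    ((Primrec.fst.pair (primrec_toCode_ofNat.comp Primrec.snd)).pair Primrec.snd))

theorem ttJump_eq_true_iff {X : ℕ → Bool} {e : ℕ} :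
    ttJump X e = true ↔ ((ofNat e).eval X e).Dom := by
  simp [ttJump]

theorem ttJump_false_eq_true_iff {j : ℕ} : ∅′ j = true ↔ ∃ s, haltApprox s j = true := by
  simp only [ttJump_eq_true_iff, haltApprox, Option.isSome_iff_exists, Part.dom_iff_mem,
    ← eval_toCode, Code.evaln_complete]
  exact exists_comm

theorem haltApprox_mono {s t j : ℕ} (hst : s ≤ t) (h : haltApprox s j = true) :
    haltApprox t j = true := by
  simp only [haltApprox, Option.isSome_iff_exists] at h ⊢
  exact h.imp fun _ => Code.evaln_mono hst

theorem eventually_haltApprox_eq (j : ℕ) : ∀ᶠ s in atTop, haltApprox s j = ∅′ j := by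
  cases hj : ∅′ j
  · refine .of_forall fun s => Bool.eq_false_iff.2 fun hs => ?_
    simp [ttJump_false_eq_true_iff.2 ⟨s, hs⟩] at hj
  · obtain ⟨s, hs⟩ := ttJump_false_eq_true_iff.1 hj
    exact eventually_atTop.2 ⟨s, fun t hst => haltApprox_mono hst hs⟩

/-- A `Π₁` property of `s`, so that `refutingStrings` is `Σ₂`. -/
def IsSettled (s m : ℕ) : Prop := ∀ t, ∀ j < m, haltApprox t j = true → haltApprox s j = true

theorem IsSettled.haltApprox_eq {s m j : ℕ} (h : IsSettled s m) (hj : j < m) :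
    haltApprox s j = ∅′ j := by
  cases hK : ∅′ j
  · exact Bool.eq_false_iff.2 fun hs => by simp [ttJump_false_eq_true_iff.2 ⟨s, hs⟩] at hK
  · obtain ⟨t, ht⟩ := ttJump_false_eq_true_iff.1 hK
    exact h t j hj ht

theorem exists_isSettled (m : ℕ) : ∃ s, IsSettled s m := by
  obtain ⟨s, hs⟩ := ((eventually_all_finite (Set.finite_Iio m)).2
    fun j _ => eventually_haltApprox_eq j).exists
  exact ⟨s, fun t j hj ht => (hs j hj).trans (ttJump_false_eq_true_iff.2 ⟨t, ht⟩)⟩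

theorem exists_code_dom_iff_eq_one : ∃ c : Code, ∀ a, (c.eval a).Dom ↔ a = 1 := by
  have hp : Partrec fun a : ℕ => Nat.rfind fun _ => Part.some (decide (a = 1)) :=
    Partrec.rfind (Primrec.eq.comp Primrec.fst (.const 1)).decide.to_comp.partrec.to₂
  obtain ⟨c, hc⟩ := Code.exists_code.1 (Partrec.nat_iff.1 hp)
  refine ⟨c, fun a => ?_⟩
  rw [hc]
  exact Nat.rfind_dom.trans (by simp)

noncomputable def haltsOnOne : Code := exists_code_dom_iff_eq_one.choose

noncomputable def probe (c : Code) : OCode := comp (ofCode haltsOnOne) (comp oracle (ofCode c))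

theorem eval_probe_dom {c : Code} {p : ℕ → ℕ} (hc : c.eval = fun z => Part.some (p z))
    (Y : ℕ → Bool) (z : ℕ) : ((probe c).eval Y z).Dom ↔ Y (p z) = true := by
  have h : (probe c).eval Y z = haltsOnOne.eval (cond (Y (p z)) 1 0) := by
    simp only [probe, eval, eval_ofCode, hc]
    exact (congrArg (Part.bind · haltsOnOne.eval) (Part.bind_some _ _)).trans (Part.bind_some _ _)
  rw [h, haltsOnOne, exists_code_dom_iff_eq_one.choose_spec]
  cases Y (p z) <;> simp

def shiftCode (c : Code) : ℕ → Code
  | 0 => c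
  | k + 1 => .comp .succ (shiftCode c k)

theorem eval_shiftCode {c : Code} {p : ℕ → ℕ} (hc : c.eval = fun z => Part.some (p z)) (k : ℕ) :
    (shiftCode c k).eval = fun z => Part.some (p z + k) := by
  induction k with
  | zero => exact hc
  | succ k ih =>
    funext z
    simp only [shiftCode, Code.eval, ih]
    exact Part.bind_some _ _

theorem primrec_index_probe_shiftCode (c : Code) :
    Primrec fun k => (probe (shiftCode c k)).index := by
  have hcomp : Primrec₂ fun a b : ℕ => 4 * Nat.pair a b + 7 :=
    Primrec.nat_add.comp (Primrec.nat_mul.comp (.const 4) Primrec₂.natPair) (.const 7)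
  have hshift : Primrec fun k => (ofCode (shiftCode c k)).index := by
    refine (Primrec.nat_rec₁ (ofCode c).index (hcomp.comp (.const 1) Primrec.snd).to₂).of_eq
      fun k => ?_
    induction k with
    | zero => rfl
    | succ k ih => simp only [ih]; rfl
  exact hcomp.comp (.const _) (hcomp.comp (.const 4) hshift)

theorem exists_probe_family {f : ℕ → ℕ} (hf : Computable f) :
    ∃ N : ℕ → ℕ, Primrec N ∧ ∀ Y k, ttJump Y (N k) = Y (f (N k) + k) := by
  obtain ⟨cf, hcf⟩ := Code.exists_code.1 (Partrec.nat_iff.1 hf)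
  refine ⟨fun k => (probe (shiftCode cf k)).index, primrec_index_probe_shiftCode cf,
    fun Y k => Bool.eq_iff_iff.2 ?_⟩
  rw [ttJump_eq_true_iff, ofNat_index]
  exact eval_probe_dom (eval_shiftCode hcf k) Y _

end

theorem strPrefix_length (X : ℕ → Bool) (n : ℕ) : (strPrefix X n).length = n := by
  simp [strPrefix]

theorem getD_strPrefix {X : ℕ → Bool} {n i : ℕ} (h : i < n) : (strPrefix X n).getD i false = X i :=
  getD_map_range X false h

theorem strPrefix_getD_length (σ : List Bool) : strPrefix (σ.getD · false) σ.length = σ :=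
  List.ext_getElem (strPrefix_length _ _) fun i _ hi => by
    rw [← List.getD_eq_getElem (d := false), ← List.getD_eq_getElem (d := false),
      getD_strPrefix hi]

theorem strPrefix_congr {X Y : ℕ → Bool} {n : ℕ} (h : ∀ i < n, X i = Y i) :
    strPrefix X n = strPrefix Y n :=
  List.map_congr_left fun i hi => h i (List.mem_range.1 hi)

theorem strPrefix_prefix_strPrefix (X : ℕ → Bool) {l n : ℕ} (h : l ≤ n) :
    strPrefix X l <+: strPrefix X n :=
  .map X (by simpa [List.take_range, h] using List.take_prefix l (List.range n))

theorem strPrefix_ttJoin_congr {A A' B B' : ℕ → Bool} {m : ℕ} (hA : ∀ i < m, A i = A' i)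
    (hB : ∀ i < m, B i = B' i) : strPrefix (ttJoin A B) m = strPrefix (ttJoin A' B') m :=
  strPrefix_congr fun i hi => by
    unfold ttJoin
    split_ifs
    exacts [hA _ (by omega), hB _ (by omega)]

theorem primrec_strPrefix {α : Type*} [Primcodable α] {X : α → ℕ → Bool} {m : α → ℕ}
    (hX : Primrec₂ X) (hm : Primrec m) : Primrec fun a => strPrefix (X a) (m a) :=
  Primrec.list_map (Primrec.list_range.comp hm) hX

theorem primrec₂_ttJoin {α : Type*} [Primcodable α] {A B : α → ℕ → Bool} (hA : Primrec₂ A)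
    (hB : Primrec₂ B) : Primrec₂ fun a n => ttJoin (A a) (B a) n :=
  have half : Primrec fun p : α × ℕ => p.2 / 2 := Primrec.nat_div.comp .snd (.const 2)
  Primrec.ite (Primrec.eq.comp (Primrec.nat_mod.comp .snd (.const 2)) (.const 0))
    (hA.comp .fst half) (hB.comp .fst half)

/-- Strings `σ` (read as `σ` followed by zeros) on which the reduction `(f, g)` mispredicts the
bit `f (N k) + k` for some `k`, computing with a stage-`s` approximation of `∅′` that is already
correct below the use `f (N k)`. -/
def refutingStrings (f : ℕ → ℕ) (g : ℕ → List Bool → Bool) (N : ℕ → ℕ) : Set (List Bool) :=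
  {σ | ∃ k s, f (N k) + k < σ.length ∧ IsSettled s (f (N k)) ∧
    σ.getD (f (N k) + k) false ≠
      g (N k) (strPrefix (ttJoin (σ.getD · false) (haltApprox s)) (f (N k)))}

/-- `a` codes the pair `(k, s)` of `refutingStrings`. -/
def refutingMatrix (f : ℕ → ℕ) (g : ℕ → List Bool → Bool) (N : ℕ → ℕ) (σ : List Bool)
    (a t : ℕ) : Bool :=
  decide (f (N a.unpair.1) + a.unpair.1 < σ.length) &&
  decide (∀ j ∈ List.range (f (N a.unpair.1)),
    haltApprox t j = true → haltApprox a.unpair.2 j = true) &&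
  (σ.getD (f (N a.unpair.1) + a.unpair.1) false !=
    g (N a.unpair.1)
      (strPrefix (ttJoin (σ.getD · false) (haltApprox a.unpair.2)) (f (N a.unpair.1))))

theorem computable_refutingMatrix {f : ℕ → ℕ} {g : ℕ → List Bool → Bool} {N : ℕ → ℕ}
    (hf : Computable f) (hg : Computable₂ g) (hN : Primrec N) :
    Computable fun q : List Bool × ℕ × ℕ => refutingMatrix f g N q.1 q.2.1 q.2.2 := by
  have hk : Primrec fun q : List Bool × ℕ × ℕ => q.2.1.unpair.1 :=
    Primrec.fst.comp (Primrec.unpair.comp (Primrec.fst.comp .snd))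
  have hs : Primrec fun q : List Bool × ℕ × ℕ => q.2.1.unpair.2 :=
    Primrec.snd.comp (Primrec.unpair.comp (Primrec.fst.comp .snd))
  have hNk := (hN.comp hk).to_comp
  have hm := hf.comp hNk
  have hpos := Primrec.nat_add.to_comp.comp hm hk.to_comp
  have hhalt : PrimrecRel fun (j : ℕ) (ts : ℕ × ℕ) =>
      haltApprox ts.1 j = true → haltApprox ts.2 j = true :=
    ((Primrec.eq.comp (primrec₂_haltApprox.comp (Primrec.fst.comp .snd) .fst) (.const true)).not.or
      (Primrec.eq.comp (primrec₂_haltApprox.comp (Primrec.snd.comp .snd) .fst)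
        (.const true))).of_eq fun _ => imp_iff_not_or.symm
  have hwindow : Primrec fun q : (List Bool × ℕ) × ℕ =>
      strPrefix (ttJoin (q.1.1.getD · false) (haltApprox q.1.2)) q.2 :=
    primrec_strPrefix (primrec₂_ttJoin
      ((Primrec.list_getD false).comp (Primrec.fst.comp (Primrec.fst.comp .fst)) .snd)
      (primrec₂_haltApprox.comp (Primrec.snd.comp (Primrec.fst.comp .fst)) .snd)) .snd
  have c₁ := Primrec.nat_lt.decide.to_comp.comp hpos (Primrec.list_length.to_comp.comp .fst)
  have c₂ := hhalt.forall_mem_list.decide.to_comp.comp (Primrec.list_range.to_comp.comp hm)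
    ((Primrec.snd.comp .snd).pair hs).to_comp
  have c₃ := (Primrec.dom_bool₂ bne).to_comp.comp
    ((Primrec.list_getD false).to_comp.comp .fst hpos)
    (hg.comp hNk (hwindow.to_comp.comp ((Computable.fst.pair hs.to_comp).pair hm)))
  exact Primrec.and.to_comp.comp (Primrec.and.to_comp.comp c₁ c₂) c₃

theorem isSigma2_refutingStrings {f : ℕ → ℕ} {g : ℕ → List Bool → Bool} {N : ℕ → ℕ}
    (hf : Computable f) (hg : Computable₂ g) (hN : Primrec N) :
    IsSigma2 (refutingStrings f g N) := by
  refine ⟨refutingMatrix f g N, computable_refutingMatrix hf hg hN, fun σ => ?_⟩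
  simp only [refutingStrings, Set.mem_ofPred_eq, IsSettled, refutingMatrix, Bool.and_eq_true,
    decide_eq_true_eq, bne_iff_ne, List.mem_range]
  constructor
  · rintro ⟨k, s, hlen, hs, hne⟩
    exact ⟨Nat.pair k s, fun t => by simpa only [Nat.unpair_pair] using ⟨⟨hlen, hs t⟩, hne⟩⟩
  · rintro ⟨a, ha⟩
    exact ⟨a.unpair.1, a.unpair.2, (ha 0).1.1, fun t => (ha t).1.2, (ha 0).2⟩

theorem strPrefix_not_mem_refutingStrings {X : ℕ → Bool} {f : ℕ → ℕ} {g : ℕ → List Bool → Bool}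
    {N : ℕ → ℕ} (hX : ∀ k, X (f (N k) + k) = g (N k) (strPrefix (ttJoin X ∅′) (f (N k))))
    (l : ℕ) : strPrefix X l ∉ refutingStrings f g N := by
  rintro ⟨k, s, hlen, hs, hne⟩
  rw [strPrefix_length] at hlen
  refine hne ?_
  rw [getD_strPrefix hlen, hX k]
  exact congrArg _ (strPrefix_ttJoin_congr (fun i _ => (getD_strPrefix (by omega)).symm)
    fun i hi => (hs.haltApprox_eq hi).symm)

theorem exists_extension_mem_refutingStrings (f : ℕ → ℕ) (g : ℕ → List Bool → Bool) (N : ℕ → ℕ)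
    (σ : List Bool) : ∃ τ, σ <+: τ ∧ τ ∈ refutingStrings f g N := by
  set k := σ.length + 1
  set m := f (N k) with hm
  obtain ⟨s, hs⟩ := exists_isSettled m
  set Y : ℕ → Bool := (σ.getD · false)
  set w := g (N k) (strPrefix (ttJoin Y ∅′) m)
  set Y' := Function.update Y (m + k) !w
  have hY' : ∀ i < m + k, Y' i = Y i := fun i hi => Function.update_of_ne (by omega) _ _
  refine ⟨strPrefix Y' (m + k + 1), ?_, k, s, by simp [strPrefix_length, hm], hs, ?_⟩
  · calc σ = strPrefix Y σ.length := (strPrefix_getD_length σ).symm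
      _ = strPrefix Y' σ.length := strPrefix_congr fun i hi => (hY' i (by omega)).symm
      _ <+: strPrefix Y' (m + k + 1) := strPrefix_prefix_strPrefix Y' (by omega)
  · rw [getD_strPrefix (by omega), strPrefix_ttJoin_congr (A' := Y) (B' := ∅′)
      (fun i hi => (getD_strPrefix (by omega)).trans (hY' i (by omega)))
      fun i hi => hs.haltApprox_eq hi]
    exact (Function.update_self _ _ _).trans_ne (Bool.not_ne_self w)

/-- For every 2-generic real `X`, the jump `X′` is not truth-table reducible to `X ⊕ 0′`. -/
theorem jump_not_tt_reducible_to_join_of_twoGeneric (X : ℕ → Bool) (hX : TwoGeneric X) :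
    ¬ TTReducible (ttJump X) (ttJoin X (ttJump fun _ => false)) := by
  rintro ⟨f, hf, g, hg, hred⟩
  obtain ⟨N, hN, hprobe⟩ := exists_probe_family hf
  rcases hX _ (isSigma2_refutingStrings hf hg hN) with ⟨l, hl⟩ | ⟨l, hl⟩
  · exact strPrefix_not_mem_refutingStrings (fun k => (hprobe X k).symm.trans (hred (N k))) l hl
  · obtain ⟨τ, hτ, hmem⟩ := exists_extension_mem_refutingStrings f g N (strPrefix X l)
    exact hl τ hτ hmem
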